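/- Let (X, μ) be a probability space and F : X → ℝ₊ measurable. Suppose there exist γ > 0, C₁, C₂ > 0 and θ ∈ (0,1) such that μ(F > λ) ≤ C₁ exp(-A^{-2/θ} λ²) + C₂ A^{-2/(1-θ)} λ^{-2} for all λ ≥ 2 and all A > 0. Then there exist constants C, λ₀ > 0 such that μ(F > λ) ≤ C λ^{-2/(1-θ)} (log λ)^{θ/(1-θ)} for all λ ≥ λ₀. -/

import Mathlib

/-!
Choose `A` so that the Gaussian term is exactly polynomial: with `c = 2/(1-θ)` and
`L = log λ`, the choice `A = (λ² / (c L))^{θ/2}` gives `A^{-2/θ} λ² = c L`, so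
`exp(-A^{-2/θ} λ²) = λ^{-c}`, while the second term becomes `C₂ (c L)^{θ/(1-θ)} λ^{-c}`.
Once `L ≥ 1` the first term is also bounded by `C₁ L^{θ/(1-θ)} λ^{-c}`.
-/

open MeasureTheory Real

namespace InterpolationTail

noncomputable def balancingScale (θ lam : ℝ) : ℝ :=
  (lam ^ 2 / (2 / (1 - θ) * log lam)) ^ (θ / 2)

variable {θ lam : ℝ}

lemma balancingScale_base_pos (hθ : θ < 1) (hlam : 1 < lam) :
    0 < lam ^ 2 / (2 / (1 - θ) * log lam) := by
  have : 0 < 1 - θ := sub_pos.2 hθ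
  have : 0 < log lam := log_pos hlam
  have : 0 < lam := by linarith
  positivity

lemma balancingScale_pos (hθ : θ < 1) (hlam : 1 < lam) : 0 < balancingScale θ lam :=
  rpow_pos_of_pos (balancingScale_base_pos hθ hlam) _

lemma exp_neg_balancingScale_rpow (hθ0 : θ ≠ 0) (hθ1 : θ < 1) (hlam : 1 < lam) :
    exp (-(balancingScale θ lam ^ (-(2 / θ))) * lam ^ 2) = lam ^ (-(2 / (1 - θ))) := by
  have hB := balancingScale_base_pos hθ1 hlam
  have hexp : θ / 2 * (-(2 / θ)) = -1 := by field_simp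
  have hlam0 : lam ^ 2 ≠ 0 := by positivity
  rw [balancingScale, ← rpow_mul hB.le, hexp, rpow_neg_one, inv_div, neg_mul,
    div_mul_cancel₀ _ hlam0, rpow_def_of_pos (by linarith), mul_comm (log lam), neg_mul]

lemma balancingScale_rpow_mul_rpow_neg_two (hθ1 : θ < 1) (hlam : 1 < lam) :
    balancingScale θ lam ^ (-(2 / (1 - θ))) * lam ^ (-(2 : ℝ)) =
      (2 / (1 - θ)) ^ (θ / (1 - θ)) * log lam ^ (θ / (1 - θ)) * lam ^ (-(2 / (1 - θ))) := by
  have h1θ : 0 < 1 - θ := sub_pos.2 hθ1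
  have hlam0 : 0 < lam := by linarith
  have hL : 0 < log lam := log_pos hlam
  have hB := balancingScale_base_pos hθ1 hlam
  have hexp : θ / 2 * (-(2 / (1 - θ))) = -(θ / (1 - θ)) := by field_simp
  have hlam_exp : 2 * -(θ / (1 - θ)) + -2 = -(2 / (1 - θ)) := by field_simp; ring
  rw [balancingScale, ← rpow_mul hB.le, hexp, div_rpow (by positivity) (by positivity),
    mul_rpow (by positivity) hL.le, ← rpow_natCast lam 2, ← rpow_mul hlam0.le,
    ← hlam_exp, rpow_add hlam0, rpow_neg (by positivity : (0 : ℝ) ≤ 2 / (1 - θ)),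
    rpow_neg hL.le]
  push_cast
  field_simp

end InterpolationTail

open InterpolationTail in
theorem interpolation_tail_optimization_general
    {X : Type*} [MeasurableSpace X] (μ : Measure X)
    (F : X → ℝ)
    (C₁ C₂ θ : ℝ) (hC₁ : 0 < C₁) (hC₂ : 0 < C₂)
    (hθ : θ ∈ Set.Ioo (0:ℝ) 1)
    (hbound : ∀ lam : ℝ, 2 ≤ lam → ∀ A : ℝ, 0 < A →
      (μ {x | lam < F x}).toReal ≤
        C₁ * Real.exp (-(A ^ (-(2/θ))) * lam ^ 2) + C₂ * A ^ (-(2/(1-θ))) * lam ^ (-(2:ℝ))) :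
    ∃ C lam₀ : ℝ, 0 < C ∧ 0 < lam₀ ∧ ∀ lam : ℝ, lam₀ ≤ lam →
      (μ {x | lam < F x}).toReal ≤
        C * lam ^ (-(2/(1-θ))) * (Real.log lam) ^ (θ/(1-θ)) := by
  obtain ⟨hθ0, hθ1⟩ := hθ
  have h1θ : 0 < 1 - θ := sub_pos.2 hθ1
  have htwo : 2 ≤ exp 1 := by linarith [add_one_le_exp (1 : ℝ)]
  refine ⟨C₁ + C₂ * (2 / (1 - θ)) ^ (θ / (1 - θ)), exp 1, by positivity, exp_pos 1,
    fun lam hlam => ?_⟩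
  have hlam1 : 1 < lam := by linarith
  have hlog : 1 ≤ log lam ^ (θ / (1 - θ)) :=
    one_le_rpow ((le_log_iff_exp_le (by linarith)).2 hlam) (by positivity)
  have hpow : 0 < lam ^ (-(2 / (1 - θ))) := rpow_pos_of_pos (by linarith) _
  calc (μ {x | lam < F x}).toReal
      ≤ C₁ * exp (-(balancingScale θ lam ^ (-(2 / θ))) * lam ^ 2) +
          C₂ * balancingScale θ lam ^ (-(2 / (1 - θ))) * lam ^ (-(2 : ℝ)) :=
        hbound lam (htwo.trans hlam) _ (balancingScale_pos hθ1 hlam1)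
    _ = (C₁ + C₂ * (2 / (1 - θ)) ^ (θ / (1 - θ)) * log lam ^ (θ / (1 - θ))) *
          lam ^ (-(2 / (1 - θ))) := by
        rw [exp_neg_balancingScale_rpow hθ0.ne' hθ1 hlam1, mul_assoc C₂,
          balancingScale_rpow_mul_rpow_neg_two hθ1 hlam1]
        ring
    _ ≤ (C₁ + C₂ * (2 / (1 - θ)) ^ (θ / (1 - θ))) * lam ^ (-(2 / (1 - θ))) *
          log lam ^ (θ / (1 - θ)) := by
        nlinarith [mul_pos hC₁ hpow]

/-- Optimization step in the interpolation tail estimate: if for all `λ ≥ 2` and all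
`A > 0` one has `μ(F > λ) ≤ C₁ exp(-A^{-2/θ} λ²) + C₂ A^{-2/(1-θ)} λ^{-2}`, then there
are `C, λ₀ > 0` with `μ(F > λ) ≤ C λ^{-2/(1-θ)} (log λ)^{θ/(1-θ)}` for all `λ ≥ λ₀`. -/
theorem interpolation_tail_optimization
    {X : Type*} [MeasurableSpace X] (μ : Measure X) [IsProbabilityMeasure μ]
    (F : X → ℝ) (hF : Measurable F) (hFnn : ∀ x, 0 ≤ F x)
    (γ C₁ C₂ θ : ℝ) (hγ : 0 < γ) (hC₁ : 0 < C₁) (hC₂ : 0 < C₂)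
    (hθ : θ ∈ Set.Ioo (0:ℝ) 1)
    (hbound : ∀ lam : ℝ, 2 ≤ lam → ∀ A : ℝ, 0 < A →
      (μ {x | lam < F x}).toReal ≤
        C₁ * Real.exp (-(A ^ (-(2/θ))) * lam ^ 2) + C₂ * A ^ (-(2/(1-θ))) * lam ^ (-(2:ℝ))) :
    ∃ C lam₀ : ℝ, 0 < C ∧ 0 < lam₀ ∧ ∀ lam : ℝ, lam₀ ≤ lam →
      (μ {x | lam < F x}).toReal ≤
        C * lam ^ (-(2/(1-θ))) * (Real.log lam) ^ (θ/(1-θ)) :=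
  interpolation_tail_optimization_general μ F C₁ C₂ θ hC₁ hC₂ hθ hbound
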